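/- (PPT criterion) If a density matrix ρ on ℂ^n ⊗ ℂ^m is separable, i.e. ρ = Σ_λ p_λ ρ_λ ⊗ σ_λ with p_λ ≥ 0 and each ρ_λ, σ_λ positive semidefinite, then the partial transpose (id ⊗ T)ρ, obtained by transposing the second tensor factor on each block, is positive semidefinite. -/

import Mathlib

open scoped Kronecker ComplexOrder
open Matrix

/-- The partial transpose `(id ⊗ T)` on matrices acting on `ℂ^n ⊗ ℂ^m`:
`((id⊗T)ρ)_{(i,k),(j,l)} = ρ_{(i,l),(j,k)}`. -/
def partialTranspose {n m : ℕ}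
    (ρ : Matrix (Fin n × Fin m) (Fin n × Fin m) ℂ) :
    Matrix (Fin n × Fin m) (Fin n × Fin m) ℂ :=
  Matrix.of fun x y => ρ (x.1, y.2) (y.1, x.2)

/-! The partial transpose of a separable state is again separable, with each `σ_λ`
replaced by `σ_λᵀ`; transposition preserves positive semidefiniteness. -/

section PartialTranspose

variable {n m : ℕ}

@[simp]
lemma partialTranspose_kronecker (A : Matrix (Fin n) (Fin n) ℂ) (B : Matrix (Fin m) (Fin m) ℂ) :
    partialTranspose (A ⊗ₖ B) = A ⊗ₖ Bᵀ := by
  ext x y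
  rfl

@[simp]
lemma partialTranspose_smul (c : ℂ) (ρ : Matrix (Fin n × Fin m) (Fin n × Fin m) ℂ) :
    partialTranspose (c • ρ) = c • partialTranspose ρ := by
  ext x y
  rfl

@[simp]
lemma partialTranspose_sum {ι : Type*} (s : Finset ι)
    (ρ : ι → Matrix (Fin n × Fin m) (Fin n × Fin m) ℂ) :
    partialTranspose (∑ i ∈ s, ρ i) = ∑ i ∈ s, partialTranspose (ρ i) := by
  ext x y
  simp only [partialTranspose, of_apply, Matrix.sum_apply]

end PartialTranspose

/-- PPT criterion: a separable density matrix has positive semidefinite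
partial transpose. -/
theorem ppt_criterion {n m k : ℕ}
    (ρ : Matrix (Fin n × Fin m) (Fin n × Fin m) ℂ)
    (p : Fin k → ℝ)
    (ρs : Fin k → Matrix (Fin n) (Fin n) ℂ)
    (σs : Fin k → Matrix (Fin m) (Fin m) ℂ)
    (hp : ∀ l, 0 ≤ p l)
    (hρs : ∀ l, (ρs l).PosSemidef) (hσs : ∀ l, (σs l).PosSemidef)
    (hsep : ρ = ∑ l, (p l : ℂ) • (ρs l ⊗ₖ σs l)) :
    (partialTranspose ρ).PosSemidef := by
  simp only [hsep, partialTranspose_sum, partialTranspose_smul, partialTranspose_kronecker]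
  refine posSemidef_sum _ fun l _ => ?_
  exact ((hρs l).kronecker (hσs l).transpose).smul (Complex.zero_le_real.mpr (hp l))
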